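/- Let F = (F_1, …, F_n) be a polynomial vector field on ℝⁿ, let V ∈ ℝ[x_1, …, x_n], let c ∈ ℝ, and suppose there exists an SOS polynomial L ∈ ℝ[x_1, …, x_n] such that −⟨∇V, F⟩ − L·(c − V) is a sum of squares. Then: (i) every point y ∈ ℝⁿ with V(y) ≤ c satisfies ⟨∇V, F⟩(y) ≤ 0; and (ii) for every solution x : ℝ → ℝⁿ of ẋ = F(x) with V(x(0)) ≤ c, one has V(x(t)) ≤ c for all t ≥ 0 and t ↦ V(x(t)) is nonincreasing on [0, ∞); i.e., the sublevel set {y : V(y) ≤ c} is forward invariant. -/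

import Mathlib

open MvPolynomial Set
open Topology Filter

/-- A real multivariate polynomial is a sum of squares. -/
def IsSOS {N : ℕ} (p : MvPolynomial (Fin N) ℝ) : Prop :=
  ∃ (k : ℕ) (f : Fin k → MvPolynomial (Fin N) ℝ), p = ∑ i, (f i) ^ 2

/-- The Lie derivative ⟨∇W, F⟩ = Σᵢ (∂W/∂xᵢ)·Fᵢ of a polynomial `W` along a
polynomial vector field `F`. -/
noncomputable def lieDeriv {N : ℕ} (W : MvPolynomial (Fin N) ℝ)
    (F : Fin N → MvPolynomial (Fin N) ℝ) : MvPolynomial (Fin N) ℝ :=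
  ∑ i, (pderiv i W) * F i

lemma eval_sos_nonneg {N : ℕ} {p : MvPolynomial (Fin N) ℝ}
    (hp : IsSOS p) (y : Fin N → ℝ) : 0 ≤ eval y p := by
  obtain ⟨k, f, rfl⟩ := hp
  simp only [map_sum, map_pow]
  exact Finset.sum_nonneg fun i _ => sq_nonneg _

lemma hasDerivAt_eval_comp {N : ℕ} (x : ℝ → Fin N → ℝ)
    (F : Fin N → MvPolynomial (Fin N) ℝ) (t : ℝ)
    (hx : ∀ i, HasDerivAt (fun τ => x τ i) (eval (x t) (F i)) t)
    (W : MvPolynomial (Fin N) ℝ) :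
    HasDerivAt (fun τ => eval (x τ) W) (eval (x t) (lieDeriv W F)) t := by
  induction W using MvPolynomial.induction_on with
  | C a =>
      simp only [eval_C, lieDeriv, pderiv_C, zero_mul, Finset.sum_const_zero, map_zero]
      exact hasDerivAt_const t a
  | add p q hp hq =>
      have : lieDeriv (p + q) F = lieDeriv p F + lieDeriv q F := by
        simp [lieDeriv, map_add, add_mul, Finset.sum_add_distrib]
      rw [this]
      simp only [map_add]
      exact hp.add hq
  | mul_X p i hp =>
      have hXi : HasDerivAt (fun τ => x τ i) (eval (x t) (F i)) t := hx i
      have hmul := hp.mul hXi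
      have : lieDeriv (p * X i) F = (lieDeriv p F) * X i + p * F i := by
        simp only [lieDeriv, pderiv_mul, Finset.sum_mul, add_mul]
        rw [Finset.sum_add_distrib]
        congr 1
        · exact Finset.sum_congr rfl fun j _ => by ring
        · rw [Finset.sum_eq_single i]
          · simp [pderiv_X_self]
          · intro j _ hj; simp [pderiv_X, hj]
          · simp
      rw [this]
      simp only [map_add, map_mul, eval_X]
      exact hmul

/-- Bilinear-search constraint for the maximum sublevel set: if `L` is SOS and
`-⟨∇V,F⟩ - L·(c - V)` is SOS, then `⟨∇V,F⟩ ≤ 0` on `{y | V(y) ≤ c}`, and the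
sublevel set `{y | V(y) ≤ c}` is forward invariant with `V` nonincreasing along
trajectories starting in it. -/
theorem sos_sublevel_invariance {N : ℕ}
    (F : Fin N → MvPolynomial (Fin N) ℝ)
    (V : MvPolynomial (Fin N) ℝ) (c : ℝ)
    (L : MvPolynomial (Fin N) ℝ) (hL : IsSOS L)
    (h : IsSOS (-(lieDeriv V F) - L * (C c - V))) :
    (∀ y : Fin N → ℝ, eval y V ≤ c → eval y (lieDeriv V F) ≤ 0) ∧
    (∀ x : ℝ → Fin N → ℝ,
      (∀ i, ∀ t : ℝ, 0 ≤ t → HasDerivAt (fun τ => x τ i) (eval (x t) (F i)) t) →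
      eval (x 0) V ≤ c →
      (∀ t : ℝ, 0 ≤ t → eval (x t) V ≤ c) ∧
        AntitoneOn (fun t => eval (x t) V) (Ici 0)) := by
  -- key pointwise inequality
  have key : ∀ y : Fin N → ℝ,
      eval y (lieDeriv V F) ≤ eval y L * (eval y V - c) := by
    intro y
    have h1 := eval_sos_nonneg h y
    simp only [map_sub, map_neg, map_mul, eval_C] at h1
    nlinarith
  have hLnn : ∀ y : Fin N → ℝ, 0 ≤ eval y L := eval_sos_nonneg hL
  have part1 : ∀ y : Fin N → ℝ, eval y V ≤ c → eval y (lieDeriv V F) ≤ 0 := by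
    intro y hy
    have := key y
    nlinarith [hLnn y]
  refine ⟨part1, ?_⟩
  intro x hx hx0
  set D : ℝ → ℝ := fun t => eval (x t) V with hDdef
  have hD : ∀ t : ℝ, 0 ≤ t → HasDerivAt D (eval (x t) (lieDeriv V F)) t :=
    fun t ht => hasDerivAt_eval_comp x F t (fun i => hx i t ht) V
  have hG : ∀ t : ℝ, 0 ≤ t → HasDerivAt (fun τ => eval (x τ) L) (eval (x t) (lieDeriv L F)) t :=
    fun t ht => hasDerivAt_eval_comp x F t (fun i => hx i t ht) L
  have hDcont : ContinuousOn D (Ici 0) :=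
    fun τ hτ => ((hD τ hτ).continuousAt).continuousWithinAt
  have hLcont : ContinuousOn (fun τ => eval (x τ) L) (Ici 0) :=
    fun τ hτ => ((hG τ hτ).continuousAt).continuousWithinAt
  -- main invariance claim
  have main : ∀ t : ℝ, 0 ≤ t → D t ≤ c := by
    by_contra hcon
    push_neg at hcon
    obtain ⟨t₁, ht₁, hgt⟩ := hcon
    have ht₁pos : 0 < t₁ := by
      rcases eq_or_lt_of_le ht₁ with h' | h'
      · exact absurd hx0 (by rw [← h'] at hgt; exact not_le.2 hgt)
      · exact h'
    -- bound K for eval L on [0, t₁]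
    obtain ⟨u, hu, hKmax⟩ := (isCompact_Icc (a := (0:ℝ)) (b := t₁)).exists_isMaxOn
      (nonempty_Icc.2 ht₁pos.le) (hLcont.mono (Icc_subset_Ici_self))
    set K : ℝ := eval (x u) L with hKdef
    have hK : ∀ τ ∈ Icc (0:ℝ) t₁, eval (x τ) L ≤ K := fun τ hτ => hKmax hτ
    -- the last time the trajectory is in the sublevel set before t₁
    set A : Set ℝ := {τ ∈ Icc (0:ℝ) t₁ | D τ ≤ c} with hAdef
    have hAne : A.Nonempty := ⟨0, ⟨left_mem_Icc.2 ht₁pos.le, hx0⟩⟩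
    have hAbdd : BddAbove A := ⟨t₁, fun τ hτ => hτ.1.2⟩
    set s : ℝ := sSup A with hsdef
    have hs0 : 0 ≤ s := le_csSup hAbdd ⟨left_mem_Icc.2 ht₁pos.le, hx0⟩
    have hst₁ : s ≤ t₁ := csSup_le hAne fun τ hτ => hτ.1.2
    have hscl : s ∈ closure A := csSup_mem_closure hAne hAbdd
    have hDs : D s ≤ c := by
      have hne : (𝓝[A] s).NeBot := mem_closure_iff_nhdsWithin_neBot.1 hscl
      have ht : Filter.Tendsto D (𝓝[A] s) (𝓝 (D s)) :=
        ((hD s hs0).continuousAt).continuousWithinAt.tendsto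
      exact le_of_tendsto ht (eventually_mem_nhdsWithin.mono fun τ hτ => hτ.2)
    have hslt : s < t₁ := by
      rcases eq_or_lt_of_le hst₁ with h' | h'
      · exact absurd hDs (by rw [h']; exact not_le.2 hgt)
      · exact h'
    have hIoc : ∀ τ ∈ Ioc s t₁, c < D τ := by
      intro τ hτ
      by_contra hle
      push_neg at hle
      have : τ ∈ A := ⟨⟨hs0.trans hτ.1.le, hτ.2⟩, hle⟩
      exact absurd (le_csSup hAbdd this) (not_le.2 hτ.1)
    -- D s = c
    have hDse : D s = c := by
      refine le_antisymm hDs ?_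
      have hne : (𝓝[Ioc s t₁] s).NeBot := by
        rw [mem_closure_iff_nhdsWithin_neBot.symm, closure_Ioc hslt.ne]
        exact left_mem_Icc.2 hslt.le
      have ht : Filter.Tendsto D (𝓝[Ioc s t₁] s) (𝓝 (D s)) :=
        ((hD s hs0).continuousAt).continuousWithinAt.tendsto
      exact ge_of_tendsto ht (eventually_mem_nhdsWithin.mono fun τ hτ => (hIoc τ hτ).le)
    -- Gronwall on [s, t₁]
    have hIcc_sub : Icc s t₁ ⊆ Ici (0:ℝ) := fun τ hτ => hs0.trans hτ.1
    have hgw := le_gronwallBound_of_liminf_deriv_right_le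
      (f := fun τ => D τ - c) (f' := fun τ => eval (x τ) (lieDeriv V F))
      (δ := 0) (K := K) (ε := 0) (a := s) (b := t₁)
      (((hDcont.mono hIcc_sub)).sub continuousOn_const)
      (fun τ hτ r hr =>
        (((hD τ (hs0.trans hτ.1)).sub_const c).hasDerivWithinAt).liminf_right_slope_le hr)
      (by show D s - c ≤ 0; rw [hDse]; simp)
      (fun τ hτ => by
        have hk := key (x τ)
        have hl := hLnn (x τ)
        have hDge : c ≤ D τ := by
          rcases eq_or_lt_of_le hτ.1 with h' | h'
          · rw [← h', hDse]
          · exact (hIoc τ ⟨h', hτ.2.le⟩).le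
        have hKτ := hK τ ⟨hs0.trans hτ.1, hτ.2.le⟩
        have : eval (x τ) L * (D τ - c) ≤ K * (D τ - c) := by nlinarith
        simpa using (hk.trans this).trans (le_of_eq (by ring)))
    have hfin := hgw t₁ (right_mem_Icc.2 hslt.le)
    rw [gronwallBound_ε0_δ0] at hfin
    linarith
  refine ⟨main, ?_⟩
  -- antitone
  have := antitoneOn_of_deriv_nonpos (convex_Ici (0:ℝ)) hDcont ?_ ?_
  · exact this
  · intro τ hτ
    rw [interior_Ici] at hτ
    exact ((hD τ (le_of_lt hτ)).differentiableAt).differentiableWithinAt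
  · intro τ hτ
    rw [interior_Ici] at hτ
    rw [(hD τ (le_of_lt hτ)).deriv]
    exact part1 (x τ) (main τ (le_of_lt hτ))
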